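/- The Milnor group Mπ of a group π normally generated by g_1,…,g_k is generated (as a group) by the images of g_1,…,g_k. -/

import Mathlib

open Subgroup

open scoped commutatorElement

private lemma commute_of_mem_closure' {G : Type*} [Group G] {s : Set G}
    (hs : ∀ a ∈ s, ∀ b ∈ s, Commute a b) :
    ∀ a ∈ Subgroup.closure s, ∀ b ∈ Subgroup.closure s, Commute a b := by
  have key : ∀ a ∈ s, ∀ b ∈ Subgroup.closure s, Commute a b := by
    intro a ha b hb
    have h : Subgroup.closure s ≤ Subgroup.centralizer {a} := by
      rw [Subgroup.closure_le]
      intro c hc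
      rw [SetLike.mem_coe, Subgroup.mem_centralizer_iff]
      rintro x rfl
      exact hs _ ha c hc
    have := h hb
    rw [Subgroup.mem_centralizer_iff] at this
    exact this a rfl
  intro a ha b hb
  have h : Subgroup.closure s ≤ Subgroup.centralizer (Subgroup.closure s : Set G) := by
    rw [Subgroup.closure_le]
    intro c hc
    rw [SetLike.mem_coe, Subgroup.mem_centralizer_iff]
    intro x hx
    exact (key c hc x hx).symm
  have := h ha
  rw [Subgroup.mem_centralizer_iff] at this
  exact (this b hb).symm

private lemma milnor_aux : ∀ (k : ℕ) (G : Type*) [Group G] (g : Fin k → G),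
    Subgroup.normalClosure (Set.range g) = ⊤ →
    (∀ (i : Fin k) (x : G), Commute (g i) (x⁻¹ * g i * x)) →
    Subgroup.closure (Set.range g) = ⊤ := by
  intro k
  induction k with
  | zero =>
    intro G _ g hg _
    have he : Set.range g = (∅ : Set G) := Set.range_eq_empty g
    rw [he] at hg ⊢
    have : Subgroup.normalClosure (∅ : Set G) = Subgroup.closure (∅ : Set G) := by
      unfold Subgroup.normalClosure
      congr 1
      simp [Group.conjugatesOfSet]
    rw [this] at hg
    exact hg
  | succ k ih =>
    intro G _ g hg hcomm
    set gl := g (Fin.last k) with hgl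
    set A := Subgroup.normalClosure ({gl} : Set G) with hA
    haveI : A.Normal := Subgroup.normalClosure_normal
    set φ : G →* G ⧸ A := QuotientGroup.mk' A with hφdef
    have hφ : Function.Surjective φ := QuotientGroup.mk'_surjective A
    -- any two conjugates of gl commute
    have hconjcomm : ∀ a ∈ Group.conjugatesOfSet ({gl} : Set G),
        ∀ b ∈ Group.conjugatesOfSet ({gl} : Set G), Commute a b := by
      intro a ha b hb
      rw [Group.mem_conjugatesOfSet_iff] at ha hb
      obtain ⟨a', ha', hca⟩ := ha
      obtain ⟨x, rfl⟩ := isConj_iff.mp hca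
      obtain ⟨b', hb', hcb⟩ := hb
      obtain ⟨y, rfl⟩ := isConj_iff.mp hcb
      rw [Set.mem_singleton_iff] at ha' hb'
      subst ha'; subst hb'
      have h1 := (hcomm (Fin.last k) (y⁻¹ * x)).map (MulAut.conj x).toMonoidHom
      simp only [MulAut.conj_apply, map_mul, map_inv, MulEquiv.coe_toMonoidHom] at h1
      have e1 : x * gl * x⁻¹ = (MulAut.conj x) gl := by simp [MulAut.conj_apply]
      have e2 : y * gl * y⁻¹ = (MulAut.conj x) ((y⁻¹ * x)⁻¹ * gl * (y⁻¹ * x)) := by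
        simp [MulAut.conj_apply, mul_assoc]
      rw [e1, e2]
      exact (hcomm (Fin.last k) (y⁻¹ * x)).map (MulAut.conj x).toMonoidHom
    have hAcomm : ∀ a ∈ A, ∀ b ∈ A, Commute a b :=
      commute_of_mem_closure' hconjcomm
    -- induction hypothesis applied to G ⧸ A
    set g' : Fin k → G ⧸ A := fun i => φ (g i.castSucc) with hg'def
    have hrange : Set.range g' = φ '' Set.range (fun i : Fin k => g i.castSucc) := by
      rw [hg'def, ← Set.range_comp]; rfl
    have hg'top : Subgroup.normalClosure (Set.range g') = ⊤ := by
      refine le_antisymm le_top ?_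
      have h1 : (⊤ : Subgroup (G ⧸ A)) = (Subgroup.normalClosure (Set.range g)).map φ := by
        rw [hg, ← MonoidHom.range_eq_map, MonoidHom.range_eq_top.mpr hφ]
      rw [h1, Subgroup.map_normalClosure _ _ hφ]
      apply Subgroup.normalClosure_le_normal
      rintro _ ⟨_, ⟨i, rfl⟩, rfl⟩
      refine Fin.lastCases ?_ ?_ i
      · have : φ gl ∈ Subgroup.normalClosure (Set.range g') := by
          have : φ gl = 1 := by
            rw [hφdef]
            simpa [QuotientGroup.eq_one_iff] using
              Subgroup.subset_normalClosure (Set.mem_singleton gl)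
          rw [this]; exact one_mem _
        exact this
      · intro j
        exact Subgroup.subset_normalClosure ⟨j, rfl⟩
    have hcomm' : ∀ (i : Fin k) (x : G ⧸ A), Commute (g' i) (x⁻¹ * g' i * x) := by
      intro i x
      obtain ⟨x, rfl⟩ := hφ x
      have := (hcomm i.castSucc x).map φ
      simpa [map_mul, map_inv] using this
    have hQ : Subgroup.closure (Set.range g') = ⊤ := ih (G ⧸ A) g' hg'top hcomm'
    -- decomposition G = H * A
    set H : Subgroup G := Subgroup.closure (Set.range fun i : Fin k => g i.castSucc) with hH
    have hdecomp : ∀ c : G, ∃ h ∈ H, h⁻¹ * c ∈ A := by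
      intro c
      have : φ c ∈ Subgroup.closure (Set.range g') := by rw [hQ]; trivial
      rw [hrange, ← MonoidHom.map_closure] at this
      obtain ⟨h, hh, hhc⟩ := this
      refine ⟨h, hh, ?_⟩
      have h1 : φ (h⁻¹ * c) = 1 := by rw [map_mul, map_inv, hhc]; group
      exact (QuotientGroup.eq_one_iff _).mp h1
    set S : Subgroup G := Subgroup.closure (Set.range g) with hS
    have hHS : H ≤ S := by
      apply Subgroup.closure_mono
      rintro _ ⟨i, rfl⟩
      exact ⟨i.castSucc, rfl⟩
    have hglS : gl ∈ S := Subgroup.subset_closure ⟨Fin.last k, rfl⟩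
    have hAS : A ≤ S := by
      rw [hA]
      show Subgroup.closure (Group.conjugatesOfSet ({gl} : Set G)) ≤ S
      rw [Subgroup.closure_le]
      intro a ha
      rw [Group.mem_conjugatesOfSet_iff] at ha
      obtain ⟨a', ha', hca⟩ := ha
      obtain ⟨c, rfl⟩ := isConj_iff.mp hca
      rw [Set.mem_singleton_iff] at ha'
      subst ha'
      obtain ⟨h, hh, hha⟩ := hdecomp c
      have hglA : gl ∈ A := Subgroup.subset_normalClosure (Set.mem_singleton gl)
      have hcg : Commute (h⁻¹ * c) gl := hAcomm _ hha _ hglA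
      have : c * gl * c⁻¹ = h * gl * h⁻¹ := by
        have e : c = h * (h⁻¹ * c) := by group
        calc c * gl * c⁻¹ = h * ((h⁻¹ * c) * gl * (h⁻¹ * c)⁻¹) * h⁻¹ := by
              rw [e]; group
        _ = h * gl * h⁻¹ := by
              have e2 : (h⁻¹ * c) * gl * (h⁻¹ * c)⁻¹ = gl := by
                rw [hcg.eq]; group
              rw [e2]
      rw [this]
      exact mul_mem (mul_mem (hHS hh) hglS) (inv_mem (hHS hh))
    rw [eq_top_iff]
    intro x _
    obtain ⟨h, hh, hha⟩ := hdecomp x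
    have : x = h * (h⁻¹ * x) := by group
    rw [this]
    exact mul_mem (hHS hh) (hAS hha)

/-- The Milnor group `Mπ` of a group `π` normally generated by `g_1,…,g_k`
is generated (as a group) by the images of `g_1,…,g_k`. -/
theorem milnor_group_generated_by_images (k : ℕ) (π : Type*) [Group π] (g : Fin k → π)
    (hg : Subgroup.normalClosure (Set.range g) = ⊤) :
    Subgroup.closure
      (Set.range fun i =>
        (QuotientGroup.mk (g i) :
          π ⧸ Subgroup.normalClosure
            {x : π | ∃ (i : Fin k) (h : π), x = ⁅g i, h⁻¹ * g i * h⁆})) = ⊤ := by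
  set N := Subgroup.normalClosure
      {x : π | ∃ (i : Fin k) (h : π), x = ⁅g i, h⁻¹ * g i * h⁆} with hN
  haveI : N.Normal := Subgroup.normalClosure_normal
  set φ : π →* π ⧸ N := QuotientGroup.mk' N with hφ
  have hsurj : Function.Surjective φ := QuotientGroup.mk'_surjective N
  have hrange : (Set.range fun i => (QuotientGroup.mk (g i) : π ⧸ N))
      = Set.range (fun i => φ (g i)) := rfl
  apply milnor_aux k (π ⧸ N) (fun i => φ (g i))
  · have : Set.range (fun i => φ (g i)) = φ '' Set.range g := by
      rw [← Set.range_comp]; rfl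
    rw [this, ← Subgroup.map_normalClosure _ _ hsurj, hg,
      ← MonoidHom.range_eq_map, MonoidHom.range_eq_top.mpr hsurj]
  · intro i x
    obtain ⟨x, rfl⟩ := hsurj x
    rw [← commutatorElement_eq_one_iff_commute]
    have : (⁅φ (g i), (φ x)⁻¹ * φ (g i) * φ x⁆ : π ⧸ N)
        = φ ⁅g i, x⁻¹ * g i * x⁆ := by
      simp [map_commutatorElement, map_mul, map_inv]
    rw [this, hφ]
    rw [show (QuotientGroup.mk' N) ⁅g i, x⁻¹ * g i * x⁆
        = (QuotientGroup.mk ⁅g i, x⁻¹ * g i * x⁆ : π ⧸ N) from rfl,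
      QuotientGroup.eq_one_iff]
    exact Subgroup.subset_normalClosure ⟨i, x, rfl⟩
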